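/- Let r be a real number and let (p_m, q_m)_{m≥1} be integers with p_m ≥ 2, q_m ≥ 1, satisfying 0 < |r·p_m − q_m| < p_m^{−m} for all m ≥ 1 and p_m^{−m} < |r·p_{m−1} − q_{m−1}| for all m ≥ 2, and set λ_m := r·p_m − q_m. Define X : ℝ → ℝ³ by X(t) = (r·t, t, x₃(t)) where x₃(t) := ∑_{m=1}^∞ (m/(2π·p_m^m·λ_m))·sin(2π·λ_m·t). Then the rotation vector ρ = (r, 1, 0) of X fails to exist in the strong sense: sup_{t≥0} ‖X(t) − X(0) − t·(r, 1, 0)‖ = +∞. -/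

import Mathlib

/-!
Suppose `|x₃(t)| ≤ C` for all `t ≥ 0`. For a sine series `∑ cₘ sin(aₘ t)` with `cₘ aₘ ≥ 0`
and `∑ |cₘ aₘ| < ∞`, every term has a nonnegative integral over `[0, T]`, so integrating over
the half period `T = π / |aₙ|` of the `n`-th term gives `2 |cₙ| / |aₙ| ≤ C T`, i.e.
`2 |cₙ| ≤ π C`. Here `cₘ aₘ = m / pₘ^m` is summable because `pₘ ≥ 2`, while the approximation
`pₘ^m |λₘ| < 1` forces `2 |cₘ| > m / π`, which is unbounded.
-/

open Real

lemma abs_mul_sin_mul_le (c a t : ℝ) : |c * sin (a * t)| ≤ |c * a| * |t| := by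
  calc |c * sin (a * t)| = |c| * |sin (a * t)| := abs_mul _ _
    _ ≤ |c| * |a * t| := mul_le_mul_of_nonneg_left abs_sin_le_abs (abs_nonneg c)
    _ = |c * a| * |t| := by rw [abs_mul, abs_mul, mul_assoc]

lemma integral_sin_mul {a : ℝ} (ha : a ≠ 0) (T : ℝ) :
    ∫ t in (0 : ℝ)..T, sin (a * t) = (1 - cos (a * T)) / a := by
  rw [intervalIntegral.integral_comp_mul_left sin ha, integral_sin, mul_zero, cos_zero,
    smul_eq_mul, inv_mul_eq_div]

lemma mul_integral_sin_mul_nonneg {c a : ℝ} (hca : 0 ≤ c * a) (T : ℝ) :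
    0 ≤ c * ∫ t in (0 : ℝ)..T, sin (a * t) := by
  rcases eq_or_ne a 0 with rfl | ha
  · simp
  rw [integral_sin_mul ha, mul_div_assoc', ← mul_div_mul_right _ _ ha,
    show c * (1 - cos (a * T)) * a = c * a * (1 - cos (a * T)) by ring]
  have := cos_le_one (a * T)
  exact div_nonneg (mul_nonneg hca (by linarith)) (mul_self_nonneg a)

section SineSeries

variable {c a : ℕ → ℝ}

lemma summable_mul_sin_mul (hsum : Summable fun m => |c m * a m|) (t : ℝ) :
    Summable fun m => c m * sin (a m * t) :=
  .of_norm_bounded (hsum.mul_right |t|) fun _ => abs_mul_sin_mul_le _ _ _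

lemma hasSum_integral_sine_series (hsum : Summable fun m => |c m * a m|) {T : ℝ} (hT : 0 ≤ T) :
    HasSum (fun m => c m * ∫ t in (0 : ℝ)..T, sin (a m * t))
      (∫ t in (0 : ℝ)..T, ∑' m, c m * sin (a m * t)) := by
  simp only [← intervalIntegral.integral_const_mul]
  refine intervalIntegral.hasSum_integral_of_dominated_convergence (fun m _ => |c m * a m| * T)
    (fun m => (by fun_prop : Continuous fun t => c m * sin (a m * t)).aestronglyMeasurable)
    (fun m => .of_forall fun t ht => ?_) (.of_forall fun t _ => hsum.mul_right T)
    intervalIntegrable_const (.of_forall fun t _ => (summable_mul_sin_mul hsum t).hasSum)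
  rw [Set.uIoc_of_le hT] at ht
  calc ‖c m * sin (a m * t)‖ ≤ |c m * a m| * |t| := abs_mul_sin_mul_le _ _ _
    _ ≤ |c m * a m| * T := by
      gcongr
      rw [abs_of_pos ht.1]
      exact ht.2

lemma mul_integral_sin_mul_le_integral_sine_series (hca : ∀ m, 0 ≤ c m * a m)
    (hsum : Summable fun m => |c m * a m|) {T : ℝ} (hT : 0 ≤ T) (n : ℕ) :
    c n * ∫ t in (0 : ℝ)..T, sin (a n * t) ≤ ∫ t in (0 : ℝ)..T, ∑' m, c m * sin (a m * t) :=
  le_hasSum (hasSum_integral_sine_series hsum hT) n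
    fun m _ => mul_integral_sin_mul_nonneg (hca m) T

lemma two_mul_abs_le_of_abs_sine_series_le (hca : ∀ m, 0 ≤ c m * a m)
    (hsum : Summable fun m => |c m * a m|) {C : ℝ}
    (hC : ∀ t, 0 ≤ t → |∑' m, c m * sin (a m * t)| ≤ C) {n : ℕ} (hn : a n ≠ 0) :
    2 * |c n| ≤ π * C := by
  have ha : 0 < |a n| := abs_pos.mpr hn
  set T := π / |a n| with hT
  have hT0 : 0 ≤ T := by positivity
  have hcos : cos (a n * T) = -1 := by
    rw [← cos_abs, abs_mul, abs_of_nonneg hT0, hT, mul_div_cancel₀ _ ha.ne', cos_pi]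
  have hc : c n / a n = |c n| / |a n| := by
    rw [← abs_div, abs_of_nonneg]
    rw [← mul_div_mul_right _ _ hn, ← sq]
    exact div_nonneg (hca n) (sq_nonneg _)
  have lower : 2 * |c n| / |a n| ≤ ∫ t in (0 : ℝ)..T, ∑' m, c m * sin (a m * t) := by
    convert mul_integral_sin_mul_le_integral_sine_series hca hsum hT0 n using 1
    rw [integral_sin_mul hn, hcos, show c n * ((1 - -1) / a n) = 2 * (c n / a n) by ring, hc]
    ring
  have upper : ∫ t in (0 : ℝ)..T, ∑' m, c m * sin (a m * t) ≤ C * T := by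
    have := intervalIntegral.norm_integral_le_of_norm_le_const
      (f := fun t => ∑' m, c m * sin (a m * t)) fun t ht => hC t (Set.uIoc_of_le hT0 ▸ ht).1.le
    rw [sub_zero, abs_of_nonneg hT0] at this
    exact (le_abs_self _).trans this
  have := lower.trans upper
  rw [hT, mul_div_assoc', div_le_div_iff_of_pos_right ha] at this
  linarith

end SineSeries

lemma summable_natCast_div_of_two_pow_le {P : ℕ → ℝ} (hP : ∀ m, 2 ^ m ≤ P m) :
    Summable fun m : ℕ => (m : ℝ) / P m := by
  refine .of_nonneg_of_le (fun m => div_nonneg m.cast_nonneg ((pow_pos two_pos m).le.trans (hP m)))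
    (fun m => ?_) ((summable_pow_mul_geometric_of_norm_lt_one 1 (r := (1 / 2 : ℝ))
      (by norm_num)).congr fun m => by rw [pow_one])
  rw [one_div, inv_pow, ← div_eq_mul_inv]
  exact div_le_div_of_nonneg_left m.cast_nonneg (pow_pos two_pos m) (hP m)

lemma two_pow_le_pow {p : ℕ → ℤ} (hp : ∀ m, 1 ≤ m → 2 ≤ p m) (m : ℕ) :
    (2 : ℝ) ^ m ≤ (p m : ℝ) ^ m := by
  rcases Nat.eq_zero_or_pos m with rfl | hm
  · simp
  · exact pow_le_pow_left₀ two_pos.le (by exact_mod_cast hp m hm) m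

lemma natCast_div_mul_cancel (m : ℕ) (P : ℝ) {l : ℝ} (hl : 1 ≤ m → l ≠ 0) :
    m / (2 * π * P * l) * (2 * π * l) = m / P := by
  rcases Nat.eq_zero_or_pos m with rfl | hm
  · simp
  have := hl hm
  field_simp

lemma norm_sub_sub_smul_eq_abs (r t : ℝ) (f : ℝ → ℝ) (hf : f 0 = 0) :
    ‖((r * t, t, f t) : ℝ × ℝ × ℝ) - (r * 0, 0, f 0) - t • (r, 1, 0)‖ = |f t| := by
  simp [hf, Prod.norm_def, mul_comm]

lemma div_pi_lt_two_mul_abs_div {P l : ℝ} (hP : 0 < P) (hl : l ≠ 0) (hPl : |l| < P⁻¹) {M : ℝ}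
    (hM : 0 < M) : M / π < 2 * |M / (2 * π * P * l)| := by
  have hPl' : P * |l| < 1 := by
    simpa [mul_inv_cancel₀ hP.ne'] using mul_lt_mul_of_pos_left hPl hP
  have : 2 * |M / (2 * π * P * l)| = M / (π * (P * |l|)) := by
    rw [abs_div, abs_of_pos hM, abs_mul, abs_of_pos (by positivity : 0 < 2 * π * P)]
    field_simp
  rw [this]
  exact div_lt_div_of_pos_left hM (by positivity) (mul_lt_of_lt_one_right pi_pos hPl')

theorem stmt18_general (r : ℝ) (p q : ℕ → ℤ)
    (hp : ∀ m : ℕ, 1 ≤ m → 2 ≤ p m)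
    (happrox : ∀ m : ℕ, 1 ≤ m →
      0 < |r * (p m : ℝ) - (q m : ℝ)| ∧
      |r * (p m : ℝ) - (q m : ℝ)| < (((p m : ℝ)) ^ m)⁻¹)
    (X : ℝ → ℝ × ℝ × ℝ)
    (hX : ∀ t : ℝ, X t = (r * t, t,
      ∑' m : ℕ, (m : ℝ) / (2 * π * ((p m : ℝ)) ^ m * (r * (p m : ℝ) - (q m : ℝ))) *
        Real.sin (2 * π * (r * (p m : ℝ) - (q m : ℝ)) * t))) :
    ∀ C : ℝ, ∃ t : ℝ, 0 ≤ t ∧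
      C < ‖X t - X 0 - t • ((r, 1, 0) : ℝ × ℝ × ℝ)‖ := by
  intro C
  by_contra! hbounded
  set c : ℕ → ℝ := fun m => m / (2 * π * (p m : ℝ) ^ m * (r * p m - q m))
  set a : ℕ → ℝ := fun m => 2 * π * (r * p m - q m)
  have hpow := two_pow_le_pow hp
  have hca (m : ℕ) : c m * a m = m / (p m : ℝ) ^ m :=
    natCast_div_mul_cancel m _ fun hm => abs_pos.mp (happrox m hm).1
  have hca_nonneg (m : ℕ) : 0 ≤ c m * a m :=
    hca m ▸ div_nonneg m.cast_nonneg ((pow_pos two_pos m).le.trans (hpow m))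
  have hsum : Summable fun m => |c m * a m| :=
    (summable_natCast_div_of_two_pow_le hpow).congr fun m => by
      rw [abs_of_nonneg (hca_nonneg m), hca]
  have hbound (t : ℝ) (ht : 0 ≤ t) : |∑' m, c m * sin (a m * t)| ≤ C := by
    have h := hbounded t ht
    rw [hX, hX, norm_sub_sub_smul_eq_abs r t (fun t => ∑' m, c m * sin (a m * t)) (by simp)] at h
    exact h
  obtain ⟨M, hM, hMC⟩ : ∃ M : ℕ, 1 ≤ M ∧ π ^ 2 * C < M :=
    ⟨⌈π ^ 2 * C⌉₊ + 1, by omega, by push_cast; linarith [Nat.le_ceil (π ^ 2 * C)]⟩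
  obtain ⟨hl, hlp⟩ := happrox M hM
  have upper := two_mul_abs_le_of_abs_sine_series_le hca_nonneg hsum hbound
    (n := M) (by simp [a, pi_ne_zero, abs_pos.mp hl])
  have lower := div_pi_lt_two_mul_abs_div ((pow_pos two_pos M).trans_le (hpow M))
    (abs_pos.mp hl) hlp (M := M) (by positivity)
  have : (M : ℝ) < π ^ 2 * C := calc
    (M : ℝ) < 2 * |c M| * π := (div_lt_iff₀ pi_pos).mp lower
    _ ≤ π * C * π := by gcongr
    _ = π ^ 2 * C := by ring
  linarith

/-- With the full approximation scheme, `λ_m = r p_m − q_m` and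
`X(t) = (r t, t, x₃(t))` where `x₃(t) = ∑_{m≥1} (m/(2π p_m^m λ_m)) sin(2π λ_m t)`, the
rotation vector `ρ = (r, 1, 0)` fails to exist in the strong sense:
`sup_{t≥0} ‖X(t) − X(0) − t ρ‖ = +∞`. -/
theorem stmt18 (r : ℝ) (p q : ℕ → ℤ)
    (hp : ∀ m : ℕ, 1 ≤ m → 2 ≤ p m) (hq : ∀ m : ℕ, 1 ≤ m → 1 ≤ q m)
    (happrox : ∀ m : ℕ, 1 ≤ m →
      0 < |r * (p m : ℝ) - (q m : ℝ)| ∧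
      |r * (p m : ℝ) - (q m : ℝ)| < (((p m : ℝ)) ^ m)⁻¹)
    (hdec : ∀ m : ℕ, 2 ≤ m →
      (((p m : ℝ)) ^ m)⁻¹ < |r * (p (m - 1) : ℝ) - (q (m - 1) : ℝ)|)
    (X : ℝ → ℝ × ℝ × ℝ)
    (hX : ∀ t : ℝ, X t = (r * t, t,
      ∑' m : ℕ, (m : ℝ) / (2 * π * ((p m : ℝ)) ^ m * (r * (p m : ℝ) - (q m : ℝ))) *
        Real.sin (2 * π * (r * (p m : ℝ) - (q m : ℝ)) * t))) :
    ∀ C : ℝ, ∃ t : ℝ, 0 ≤ t ∧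
      C < ‖X t - X 0 - t • ((r, 1, 0) : ℝ × ℝ × ℝ)‖ :=
  stmt18_general r p q hp happrox X hX
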